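/- Let g be the 4-dimensional solvable real Lie algebra with basis e_1,…,e_4 and nonzero brackets [e_2,e_3] = −e_3 and [e_2,e_4] = e_4, and for t ∈ ℝ let K_t be the endomorphism equal to +id on g⁺_t := span(e_2, e_3) and −id on g⁻_t := span(e_1, e_4 + t e_2). Then: (i) for every t ∈ ℝ, g = g⁺_t ⊕ g⁻_t is a linear D-complex structure; (ii) the 2-form ω := e^1∧e^2 + e^3∧e^4 is d-closed, nondegenerate and K_0-anti-invariant (a linear D-Kähler structure for K_0); (iii) for every t ≠ 0, every d-closed K_t-anti-invariant 2-form η ∈ Λ^2 g* satisfies η∧η = 0; in particular, for t ≠ 0 there exists no d-closed nondegenerate K_t-anti-invariant 2-form. Hence the property of admitting a linear D-Kähler structure is not stable under small deformations of the D-complex structure. -/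

import Mathlib

open scoped BigOperators

noncomputable section ChevalleyEilenberg

variable (g : Type*) [LieRing g] [LieAlgebra ℝ g]

/-- The Chevalley–Eilenberg differential of an alternating `k`-form on a real Lie
algebra, as a function on `(k+1)`-tuples:
`(dα)(x_0,…,x_k) = Σ_{i<j} (−1)^{i+j} α([x_i,x_j], x_0,…,x̂_i,…,x̂_j,…,x_k)`. -/
def ceD : {k : ℕ} → AlternatingMap ℝ g ℝ (Fin k) → ((Fin (k + 1) → g) → ℝ)
  | 0, _ => 0
  | (k + 1), α => fun x =>
      ∑ i : Fin (k + 2), ∑ j : Fin (k + 2),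
        if hij : (i : ℕ) < (j : ℕ) then
          (-1 : ℝ) ^ ((i : ℕ) + (j : ℕ)) *
            α (fun m : Fin (k + 1) =>
                if hm : (m : ℕ) = 0 then ⁅x i, x j⁆
                else
                  x (j.succAbove
                      ((⟨(i : ℕ), by omega⟩ : Fin (k + 1)).succAbove
                        (⟨(m : ℕ) - 1, by omega⟩ : Fin k))))
        else 0

theorem ceD_zero {k : ℕ} : ceD g (0 : AlternatingMap ℝ g ℝ (Fin k)) = 0 := by
  cases k with
  | zero => rfl
  | succ k => funext x; simp [ceD]

theorem ceD_add {k : ℕ} (α β : AlternatingMap ℝ g ℝ (Fin k)) :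
    ceD g (α + β) = ceD g α + ceD g β := by
  cases k with
  | zero => funext x; simp [ceD]
  | succ k =>
    funext x
    simp only [ceD, Pi.add_apply, AlternatingMap.add_apply]
    rw [← Finset.sum_add_distrib]
    refine Finset.sum_congr rfl fun i _ => ?_
    rw [← Finset.sum_add_distrib]
    refine Finset.sum_congr rfl fun j _ => ?_
    split
    · ring
    · ring

theorem ceD_smul {k : ℕ} (c : ℝ) (α : AlternatingMap ℝ g ℝ (Fin k)) :
    ceD g (c • α) = c • ceD g α := by
  cases k with
  | zero => funext x; simp [ceD]
  | succ k =>
    funext x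
    simp only [ceD, Pi.smul_apply, AlternatingMap.smul_apply, smul_eq_mul,
      Finset.mul_sum]
    refine Finset.sum_congr rfl fun i _ => ?_
    refine Finset.sum_congr rfl fun j _ => ?_
    split
    · ring
    · ring

/-- The space of `d`-closed `k`-forms. -/
def Zsub (k : ℕ) : Submodule ℝ (AlternatingMap ℝ g ℝ (Fin k)) where
  carrier := {α | ceD g α = 0}
  add_mem' := by
    intro a b ha hb
    simp only [Set.mem_setOf_eq] at *
    rw [ceD_add, ha, hb, add_zero]
  zero_mem' := by
    simpa only [Set.mem_setOf_eq] using ceD_zero g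
  smul_mem' := by
    intro c a ha
    simp only [Set.mem_setOf_eq] at *
    rw [ceD_smul, ha, smul_zero]

/-- The space of `d`-exact `k`-forms. -/
def Bsub : (k : ℕ) → Submodule ℝ (AlternatingMap ℝ g ℝ (Fin k))
  | 0 => ⊥
  | (k + 1) =>
    { carrier := {α | ∃ β : AlternatingMap ℝ g ℝ (Fin k), ceD g β = ⇑α}
      add_mem' := by
        rintro a b ⟨βa, hβa⟩ ⟨βb, hβb⟩
        exact ⟨βa + βb, by rw [ceD_add, hβa, hβb]; ext x; simp⟩
      zero_mem' := ⟨0, by rw [ceD_zero]; ext x; simp⟩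
      smul_mem' := by
        rintro c a ⟨β, hβ⟩
        exact ⟨c • β, by rw [ceD_smul, hβ]; rfl⟩ }

/-- The `k`-th Lie algebra cohomology `H^k(g;ℝ) = ker d / im d`. -/
abbrev Hcoh (k : ℕ) : Type _ :=
  @HasQuotient.Quotient ↥(Zsub g k) _ (@Submodule.hasQuotient ℝ ↥(Zsub g k) _ _ _)
    ((Bsub g k).comap (Zsub g k).subtype)

/-- The cohomology class of a `d`-closed `k`-form. -/
def cls {k : ℕ} (α : AlternatingMap ℝ g ℝ (Fin k)) (hα : ceD g α = 0) : Hcoh g k :=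
  Submodule.Quotient.mk (⟨α, hα⟩ : Zsub g k)

/-- The subgroup `H^{k+}_K(g;ℝ)` of classes admitting a `d`-closed `K`-invariant
representative.  (The set of such classes is a linear subspace, so taking its span
does not enlarge it.) -/
def Hplus (K : g →ₗ[ℝ] g) (k : ℕ) : Submodule ℝ (Hcoh g k) :=
  Submodule.span ℝ
    {c | ∃ (α : AlternatingMap ℝ g ℝ (Fin k)) (hα : ceD g α = 0),
        α.compLinearMap K = α ∧ c = cls g α hα}

/-- The subgroup `H^{k−}_K(g;ℝ)` of classes admitting a `d`-closed
`K`-anti-invariant representative. -/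
def Hminus (K : g →ₗ[ℝ] g) (k : ℕ) : Submodule ℝ (Hcoh g k) :=
  Submodule.span ℝ
    {c | ∃ (α : AlternatingMap ℝ g ℝ (Fin k)) (hα : ceD g α = 0),
        α.compLinearMap K = -α ∧ c = cls g α hα}

/-- The wedge product of `k` linear functionals, as an alternating `k`-form. -/
def wedge {k : ℕ} (fs : Fin k → (g →ₗ[ℝ] ℝ)) :
    AlternatingMap ℝ g ℝ (Fin k) :=
  MultilinearMap.alternatization
    ((MultilinearMap.mkPiAlgebra ℝ (Fin k) ℝ).compLinearMap fs)

end ChevalleyEilenberg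

noncomputable section

section Solv

variable (g : Type*) [LieRing g] [LieAlgebra ℝ g] (e : Module.Basis (Fin 4) ℝ g)

/-- `g⁺_t = span(e_2, e_3)` (0-indexed: `e 1, e 2`), independent of `t`. -/
def gP : Submodule ℝ g := Submodule.span ℝ {e 1, e 2}

/-- `g⁻_t = span(e_1, e_4 + t e_2)` (0-indexed: `e 0, e 3 + t • e 1`). -/
def gM (t : ℝ) : Submodule ℝ g := Submodule.span ℝ {e 0, e 3 + t • e 1}

/-- `ω = e^1∧e^2 + e^3∧e^4`. -/
def omegaF : AlternatingMap ℝ g ℝ (Fin 2) :=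
  wedge g ![e.coord 0, e.coord 1] + wedge g ![e.coord 2, e.coord 3]

/-! Closedness of a 2-form `η` evaluated on `(e₁, e₂, e₃)` and `(e₁, e₂, e₄)` gives
`η(e₁, e₃) = η(e₁, e₄) = 0`, and `K_t`-anti-invariance on `(e₂, e₃)` gives `η(e₂, e₃) = 0`.
On `(e₁, e₄)` it gives `η(e₁, e₄) + 2t η(e₁, e₂) = -η(e₁, e₄)`, because `K_t e₄ = -e₄ - 2t e₂`;
so for `t ≠ 0` also `η(e₁, e₂) = 0`. Then `η = η(·, e₄) ∧ e⁴` is decomposable, hence `η ∧ η = 0`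
and `e₁` lies in the kernel of `η`. For `t = 0` the last constraint disappears, and
`ω = e¹∧e² + e³∧e⁴` is closed, nondegenerate and `K₀`-anti-invariant by direct computation in
coordinates. In Lean the basis is indexed from `0`, so `e₁` is `e 0`. -/

namespace AlternatingMap

section CommSemiring

variable {R M N : Type*} [CommSemiring R] [AddCommMonoid M] [Module R M] [AddCommMonoid N]
  [Module R N]

def toBilin (η : M [⋀^Fin 2]→ₗ[R] N) : M →ₗ[R] M →ₗ[R] N :=
  LinearMap.mk₂ R (fun x y => η ![x, y])
    (fun x x' y => η.map_vecCons_add ![y] x x')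
    (fun c x y => η.map_vecCons_smul ![y] c x)
    (fun x y y' => (η.curryLeft x).map_vecCons_add ![] y y')
    (fun c x y => (η.curryLeft x).map_vecCons_smul ![] c y)

theorem toBilin_apply (η : M [⋀^Fin 2]→ₗ[R] N) (x y : M) : η.toBilin x y = η ![x, y] := rfl

theorem toBilin_injective : Function.Injective (toBilin : (M [⋀^Fin 2]→ₗ[R] N) → _) := by
  intro η η' h
  ext v
  have hv : v = ![v 0, v 1] := by ext i; fin_cases i <;> rfl
  rw [hv]
  exact LinearMap.congr_fun₂ h (v 0) (v 1)

theorem toBilin_compLinearMap (η : M [⋀^Fin 2]→ₗ[R] N) (K : M →ₗ[R] M) :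
    (η.compLinearMap K).toBilin = η.toBilin.compl₁₂ K K := by
  ext x y
  simp only [toBilin_apply, LinearMap.compl₁₂_apply, compLinearMap_apply]
  congr 1
  ext i; fin_cases i <;> rfl

end CommSemiring

section CommRing

variable {R M N : Type*} [CommRing R] [AddCommGroup M] [Module R M] [AddCommGroup N]
  [Module R N]

theorem toBilin_neg (η : M [⋀^Fin 2]→ₗ[R] N) : (-η).toBilin = -η.toBilin := rfl

theorem toBilin_self (η : M [⋀^Fin 2]→ₗ[R] N) (x : M) : η.toBilin x x = 0 :=
  η.map_eq_zero_of_eq (i := 0) (j := 1) ![x, x] rfl (by decide)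

theorem toBilin_swap (η : M [⋀^Fin 2]→ₗ[R] N) (x y : M) : η.toBilin y x = -η.toBilin x y := by
  have h := η.map_swap ![x, y] (by decide : (0 : Fin 2) ≠ 1)
  have hs : ![x, y] ∘ Equiv.swap 0 1 = ![y, x] := by ext i; fin_cases i <;> rfl
  rwa [hs] at h

theorem toBilin_eq_of_basis_eq_zero {ι : Type*} (e : Module.Basis ι R M)
    (k : ι) (η : M [⋀^Fin 2]→ₗ[R] R) (h : ∀ i j, i ≠ k → j ≠ k → η.toBilin (e i) (e j) = 0)
    (x y : M) :
    η.toBilin x y = η.toBilin x (e k) * e.coord k y - η.toBilin y (e k) * e.coord k x := by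
  classical
  let B := (LinearMap.mul R R).compl₁₂ (η.toBilin.flip (e k)) (e.coord k)
  suffices η.toBilin = B - B.flip by simpa [B] using LinearMap.congr_fun₂ this x y
  refine LinearMap.ext_basis e e fun i j => ?_
  simp only [B, LinearMap.sub_apply, LinearMap.flip_apply, LinearMap.compl₁₂_apply,
    LinearMap.mul_apply', Module.Basis.coord_apply, Module.Basis.repr_self_apply]
  by_cases hi : i = k <;> by_cases hj : j = k
  · simp [hi, hj, toBilin_self]
  · simp [hi, hj, toBilin_swap η (e j)]
  · simp [hi, hj]
  · simp [hi, hj, h i j hi hj]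

end CommRing

end AlternatingMap

theorem pfaffian_eq_zero_of_eq_mul_sub_mul {M R : Type*} [CommRing R] (B : M → M → R)
    (a b : M → R) (h : ∀ x y, B x y = a x * b y - a y * b x) (x : Fin 4 → M) :
    B (x 0) (x 1) * B (x 2) (x 3) - B (x 0) (x 2) * B (x 1) (x 3) +
      B (x 0) (x 3) * B (x 1) (x 2) = 0 := by
  simp only [h]
  ring

namespace Submodule

theorem lie_mem_span {R L : Type*} [CommRing R] [LieRing L] [LieAlgebra R L]
    {s : Set L} (hs : ∀ x ∈ s, ∀ y ∈ s, ⁅x, y⁆ ∈ span R s) {x y : L} (hx : x ∈ span R s)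
    (hy : y ∈ span R s) : ⁅x, y⁆ ∈ span R s := by
  induction hx, hy using span_induction₂ with
  | mem_mem x y hx hy => exact hs x hx y hy
  | zero_left y hy => simp
  | zero_right x hx => simp
  | add_left x y z _ _ _ hx hy => simpa only [add_lie] using add_mem hx hy
  | add_right x y z _ _ _ hx hy => simpa only [lie_add] using add_mem hx hy
  | smul_left r x y _ _ h => simpa only [smul_lie] using smul_mem _ r h
  | smul_right r x y _ _ h => simpa only [lie_smul] using smul_mem _ r h

section Field

open Module

variable {K V : Type*} [Field K] [AddCommGroup V] [Module K V]

theorem finrank_span_pair_le (a b : V) : finrank K (span K {a, b}) ≤ 2 := by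
  classical
  refine (finrank_span_le_card _).trans ?_
  simpa using Finset.card_le_two

theorem isCompl_span_pair_of_span_eq_top [FiniteDimensional K V] (hV : finrank K V = 4)
    {a b c d : V} (h : span K {a, b, c, d} = ⊤) : IsCompl (span K {a, b}) (span K {c, d}) := by
  have hsup : span K {a, b} ⊔ span K {c, d} = ⊤ := by
    rw [← span_union, Set.insert_union, Set.singleton_union, h]
  refine ⟨disjoint_iff.2 ?_, codisjoint_iff.2 hsup⟩
  have hdim := finrank_sup_add_finrank_inf_eq (span K {a, b}) (span K {c, d})
  rw [hsup, finrank_top, hV] at hdim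
  have := finrank_span_pair_le (K := K) a b
  have := finrank_span_pair_le (K := K) c d
  exact finrank_eq_zero.1 (by omega)

end Field

end Submodule

def HasBrackets : Prop :=
  ∀ i j : Fin 4, i < j → ⁅e i, e j⁆ =
    (if i = 1 ∧ j = 2 then -e 2 else if i = 1 ∧ j = 3 then e 3 else 0)

section Example

variable {g e}

open AlternatingMap

theorem ceD_two_apply (η : AlternatingMap ℝ g ℝ (Fin 2)) (x : Fin 3 → g) :
    ceD g η x = -η ![⁅x 0, x 1⁆, x 2] + η ![⁅x 0, x 2⁆, x 1] - η ![⁅x 1, x 2⁆, x 0] := by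
  simp [ceD, Fin.sum_univ_three, sub_eq_add_neg, pow_succ]
  -- the remaining argument tuples are `succAbove`-lambdas that agree with the `![…]` entrywise
  refine congrArg₂ (· + ·) (congrArg₂ (· + ·) (congrArg (- ·) (congrArg η ?_))
    (congrArg η ?_)) (congrArg (- ·) (congrArg η ?_)) <;> ext m <;> fin_cases m <;> rfl

theorem wedge_two_apply (f h : g →ₗ[ℝ] ℝ) (x y : g) :
    wedge g ![f, h] ![x, y] = f x * h y - f y * h x := by
  rw [wedge, MultilinearMap.alternatization_apply,
    show (Finset.univ : Finset (Equiv.Perm (Fin 2))) = {1, Equiv.swap 0 1} by decide,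
    Finset.sum_pair (by decide)]
  simp
  ring

theorem lie_eq_coord (hbr : HasBrackets g e) (x y : g) :
    ⁅x, y⁆ = (e.coord 1 x * e.coord 3 y - e.coord 3 x * e.coord 1 y) • e 3 -
      (e.coord 1 x * e.coord 2 y - e.coord 2 x * e.coord 1 y) • e 2 := by
  have hbasis : ∀ i j : Fin 4, ⁅e i, e j⁆ =
      (e.coord 1 (e i) * e.coord 3 (e j) - e.coord 3 (e i) * e.coord 1 (e j)) • e 3 -
      (e.coord 1 (e i) * e.coord 2 (e j) - e.coord 2 (e i) * e.coord 1 (e j)) • e 2 := by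
    intro i j
    rcases lt_trichotomy i j with h | rfl | h
    · rw [hbr i j h]
      fin_cases i <;> fin_cases j <;> simp at h ⊢
    · fin_cases i <;> simp
    · rw [← lie_skew, hbr j i h]
      fin_cases i <;> fin_cases j <;> simp at h ⊢
  conv_lhs => rw [← e.sum_repr x, ← e.sum_repr y]
  simp only [Fin.sum_univ_four, add_lie, lie_add, smul_lie, lie_smul, hbasis,
    Module.Basis.coord_apply, Module.Basis.repr_self_apply, Fin.reduceEq, ↓reduceIte]
  module

theorem lie_mem_gP (hbr : HasBrackets g e) {x y : g} (hx : x ∈ gP g e) (hy : y ∈ gP g e) :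
    ⁅x, y⁆ ∈ gP g e := by
  refine Submodule.lie_mem_span ?_ hx hy
  simpa [lie_eq_coord hbr] using Submodule.subset_span (by simp)

theorem lie_mem_gM (hbr : HasBrackets g e) (t : ℝ) {x y : g} (hx : x ∈ gM g e t)
    (hy : y ∈ gM g e t) : ⁅x, y⁆ ∈ gM g e t := by
  refine Submodule.lie_mem_span ?_ hx hy
  simp [lie_eq_coord hbr]

theorem isCompl_gP_gM (t : ℝ) : IsCompl (gP g e) (gM g e t) := by
  have : FiniteDimensional ℝ g := Module.Finite.of_basis e
  refine Submodule.isCompl_span_pair_of_span_eq_top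
    (by simp [Module.finrank_eq_card_basis e]) ?_
  rw [eq_top_iff, ← e.span_eq, Submodule.span_le]
  rintro _ ⟨i, rfl⟩
  fin_cases i
  iterate 3 exact Submodule.subset_span (by simp)
  have h3 : e 3 + t • e 1 - t • e 1 ∈ Submodule.span ℝ {e 1, e 2, e 0, e 3 + t • e 1} :=
    Submodule.sub_mem _ (Submodule.subset_span (by simp))
      (Submodule.smul_mem _ _ (Submodule.subset_span (by simp)))
  simpa using h3

theorem omegaF_apply (x y : g) : omegaF g e ![x, y] =
    e.coord 0 x * e.coord 1 y - e.coord 0 y * e.coord 1 x +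
      (e.coord 2 x * e.coord 3 y - e.coord 2 y * e.coord 3 x) := by
  simp only [omegaF, AlternatingMap.add_apply, wedge_two_apply]

theorem ceD_omegaF_eq_zero (hbr : HasBrackets g e) : ceD g (omegaF g e) = 0 := by
  funext x
  simp [ceD_two_apply, omegaF_apply, lie_eq_coord hbr]
  ring

theorem omegaF_nondegenerate {x : g} (hx : ∀ y, omegaF g e ![x, y] = 0) : x = 0 := by
  refine e.forall_coord_eq_zero_iff.1 fun i => ?_
  fin_cases i
  · simpa [omegaF_apply] using hx (e 1)
  · simpa [omegaF_apply] using hx (e 0)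
  · simpa [omegaF_apply] using hx (e 3)
  · simpa [omegaF_apply] using hx (e 2)

theorem apply_basis_of_eqOn_gP_gM {t : ℝ} {K : g →ₗ[ℝ] g} (hKP : ∀ x ∈ gP g e, K x = x)
    (hKM : ∀ x ∈ gM g e t, K x = -x) :
    K (e 0) = -e 0 ∧ K (e 1) = e 1 ∧ K (e 2) = e 2 ∧ K (e 3) = -e 3 - (2 * t) • e 1 := by
  have h1 : K (e 1) = e 1 := hKP _ (Submodule.subset_span (by simp))
  refine ⟨hKM _ (Submodule.subset_span (by simp)), h1,
    hKP _ (Submodule.subset_span (by simp)), ?_⟩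
  have h3 := hKM _ (Submodule.subset_span (by simp) : e 3 + t • e 1 ∈ gM g e t)
  rw [map_add, map_smul, h1] at h3
  rw [eq_sub_of_add_eq h3]
  module

theorem omegaF_compLinearMap_eq_neg {K : g →ₗ[ℝ] g} (hKP : ∀ x ∈ gP g e, K x = x)
    (hKM : ∀ x ∈ gM g e 0, K x = -x) : (omegaF g e).compLinearMap K = -omegaF g e := by
  obtain ⟨h0, h1, h2, h3⟩ := apply_basis_of_eqOn_gP_gM hKP hKM
  apply toBilin_injective
  rw [toBilin_compLinearMap]
  refine LinearMap.ext_basis e e fun i j => ?_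
  fin_cases i <;> fin_cases j <;> simp [h0, h1, h2, h3, toBilin_apply, omegaF_apply]

theorem toBilin_basis_of_closed_of_antiInvariant (hbr : HasBrackets g e) {t : ℝ} (ht : t ≠ 0)
    {K : g →ₗ[ℝ] g} (hKP : ∀ x ∈ gP g e, K x = x) (hKM : ∀ x ∈ gM g e t, K x = -x)
    {η : AlternatingMap ℝ g ℝ (Fin 2)} (hη : ceD g η = 0) (hK : η.compLinearMap K = -η) :
    η.toBilin (e 0) (e 1) = 0 ∧ η.toBilin (e 0) (e 2) = 0 ∧ η.toBilin (e 0) (e 3) = 0 ∧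
      η.toBilin (e 1) (e 2) = 0 := by
  obtain ⟨h0, h1, h2, h3⟩ := apply_basis_of_eqOn_gP_gM hKP hKM
  have hK' : ∀ x y, η.toBilin (K x) (K y) = -η.toBilin x y := fun x y => by
    simpa [toBilin_compLinearMap, toBilin_neg] using LinearMap.congr_fun₂ (congrArg toBilin hK) x y
  have h20 : η.toBilin (e 2) (e 0) = 0 := by
    simpa [ceD_two_apply, lie_eq_coord hbr, ← toBilin_apply] using congrFun hη ![e 0, e 1, e 2]
  have h30 : η.toBilin (e 3) (e 0) = 0 := by
    simpa [ceD_two_apply, lie_eq_coord hbr, ← toBilin_apply] using congrFun hη ![e 0, e 1, e 3]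
  have h12 : η.toBilin (e 1) (e 2) = -η.toBilin (e 1) (e 2) := by
    simpa [h1, h2] using hK' (e 1) (e 2)
  have h03 : 2 * t * η.toBilin (e 0) (e 1) + η.toBilin (e 0) (e 3) = -η.toBilin (e 0) (e 3) := by
    simpa [h0, h1, h3] using hK' (e 0) (e 3)
  rw [toBilin_swap] at h20 h30
  refine ⟨?_, by linarith, by linarith, by linarith⟩
  have h01 : t * η.toBilin (e 0) (e 1) = 0 := by linarith
  exact (mul_eq_zero.1 h01).resolve_left ht

theorem toBilin_eq_of_closed_of_antiInvariant (hbr : HasBrackets g e) {t : ℝ} (ht : t ≠ 0)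
    {K : g →ₗ[ℝ] g} (hKP : ∀ x ∈ gP g e, K x = x) (hKM : ∀ x ∈ gM g e t, K x = -x)
    {η : AlternatingMap ℝ g ℝ (Fin 2)} (hη : ceD g η = 0) (hK : η.compLinearMap K = -η)
    (x y : g) :
    η.toBilin x y = η.toBilin x (e 3) * e.coord 3 y - η.toBilin y (e 3) * e.coord 3 x := by
  obtain ⟨h01, h02, -, h12⟩ := toBilin_basis_of_closed_of_antiInvariant hbr ht hKP hKM hη hK
  refine toBilin_eq_of_basis_eq_zero e 3 η (fun i j hi hj => ?_) x y
  have hswap : ∀ a b : g, η.toBilin a b = 0 → η.toBilin b a = 0 := fun a b h => by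
    rw [toBilin_swap, h, neg_zero]
  fin_cases i <;> fin_cases j <;>
    simp_all [toBilin_self, hswap _ _ h01, hswap _ _ h02, hswap _ _ h12]

end Example

/-- On the 4-dimensional solvable Lie algebra with
`[e_2,e_3] = −e_3`, `[e_2,e_4] = e_4`, the curve `K_t` of linear D-complex
structures (`g⁺_t = span(e_2,e_3)`, `g⁻_t = span(e_1, e_4 + t e_2)`) satisfies:
`ω = e^1∧e^2 + e^3∧e^4` is a linear D-Kähler structure for `K_0`, while for
`t ≠ 0` every closed `K_t`-anti-invariant 2-form `η` satisfies `η∧η = 0`, so there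
is no linear D-Kähler structure for `K_t`: D-Kählerness is not stable under small
deformations of the D-complex structure. -/
theorem DKahler_not_stable_under_deformation
    (hbr : ∀ i j : Fin 4, i < j → ⁅e i, e j⁆ =
      (if i = 1 ∧ j = 2 then -e 2 else if i = 1 ∧ j = 3 then e 3 else 0)) :
    (∀ t : ℝ, IsCompl (gP g e) (gM g e t) ∧
      (∀ x ∈ gP g e, ∀ y ∈ gP g e, ⁅x, y⁆ ∈ gP g e) ∧
      (∀ x ∈ gM g e t, ∀ y ∈ gM g e t, ⁅x, y⁆ ∈ gM g e t)) ∧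
    (∀ K : g →ₗ[ℝ] g, (∀ x ∈ gP g e, K x = x) → (∀ x ∈ gM g e 0, K x = -x) →
      ceD g (omegaF g e) = 0 ∧
      (∀ x : g, (∀ y : g, omegaF g e ![x, y] = 0) → x = 0) ∧
      (omegaF g e).compLinearMap K = -(omegaF g e)) ∧
    (∀ t : ℝ, t ≠ 0 → ∀ K : g →ₗ[ℝ] g,
      (∀ x ∈ gP g e, K x = x) → (∀ x ∈ gM g e t, K x = -x) →
      (∀ η : AlternatingMap ℝ g ℝ (Fin 2),
        ceD g η = 0 → η.compLinearMap K = -η →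
        ∀ x : Fin 4 → g,
          η ![x 0, x 1] * η ![x 2, x 3] - η ![x 0, x 2] * η ![x 1, x 3] +
            η ![x 0, x 3] * η ![x 1, x 2] = 0) ∧
      ¬ ∃ η : AlternatingMap ℝ g ℝ (Fin 2),
          ceD g η = 0 ∧ η.compLinearMap K = -η ∧
          (∀ x : g, (∀ y : g, η ![x, y] = 0) → x = 0)) := by
  refine ⟨fun t => ⟨isCompl_gP_gM t, fun x hx y hy => lie_mem_gP hbr hx hy,
      fun x hx y hy => lie_mem_gM hbr t hx hy⟩,
    fun K hKP hKM => ⟨ceD_omegaF_eq_zero hbr, fun x hx => omegaF_nondegenerate hx,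
      omegaF_compLinearMap_eq_neg hKP hKM⟩,
    fun t ht K hKP hKM => ⟨fun η hη hK x => ?_, ?_⟩⟩
  · exact pfaffian_eq_zero_of_eq_mul_sub_mul (fun u v => η ![u, v]) _ _
      (toBilin_eq_of_closed_of_antiInvariant hbr ht hKP hKM hη hK) x
  · rintro ⟨η, hη, hK, hnd⟩
    have h03 := (toBilin_basis_of_closed_of_antiInvariant hbr ht hKP hKM hη hK).2.2.1
    refine e.ne_zero 0 (hnd _ fun y => ?_)
    rw [← AlternatingMap.toBilin_apply,
      toBilin_eq_of_closed_of_antiInvariant hbr ht hKP hKM hη hK, h03]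
    simp

end Solv

end
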